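/- With the notation of the context, for every particle array v ∈ Z^{T·M} one has (π⊗Φ)(v) = M^T · ψ̄(v) · b(𝟏 | v); that is, the density of a path drawn from π together with companion particles generated by the conditional SMC algorithm equals M^T times the density of the unconditional particle filter reweighted by its normalising-constant estimator, multiplied by the backward-sampling probability of the conditioned path. -/

import Mathlib

/-!
Write `W_t = ∑_i w_t(v_t^i)` and `q_t` for the mixture density from which the particles at time
`t + 1` are drawn. Splitting `ψ(v)` into the factors of the conditioned particles `v_t^1` and of
their companions leaves exactly the conditional-SMC factor of `(π⊗Φ)(v)` for the companions. Along
the conditioned path, `W_t` from `Ĉ` cancels the denominator of `q_t(v_{t+1}^1)`, whose numerator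
is the denominator of the `t`-th backward-sampling factor; what survives is `γ(v^{(𝟏)})`, and
`M^T` undoes the factors `1/M` in `Ĉ`.
-/

open MeasureTheory Finset

namespace SSM12

variable {Z : Type*}

/-- The path `v^{(k)}` extracted from the particle array `v`. -/
def pathOf (n m : ℕ) (v : Fin (n + 1) → Fin (m + 1) → Z)
    (k : Fin (n + 1) → Fin (m + 1)) : Fin (n + 1) → Z := fun t => v t (k t)

/-- The constant index path `𝟏`. -/
def onePath (n m : ℕ) : Fin (n + 1) → Fin (m + 1) := fun _ => 0

/-- The unnormalised target density
`γ(z) = m(z_1) ∏_{t=2}^T f(z_{t-1},z_t) · ∏_{t=1}^T w_t(z_t)` with `T = n+1`. -/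
noncomputable def gammaSSM (n : ℕ) (m₀ : Z → ℝ) (f : Z → Z → ℝ)
    (w : Fin (n + 1) → Z → ℝ) (z : Fin (n + 1) → Z) : ℝ :=
  m₀ (z 0) * (∏ t : Fin n, f (z t.castSucc) (z t.succ)) * ∏ t, w t (z t)

/-- The backward-sampling probabilities `b(k|v)`. -/
noncomputable def bBack (n m : ℕ) (f : Z → Z → ℝ) (w : Fin (n + 1) → Z → ℝ)
    (k : Fin (n + 1) → Fin (m + 1)) (v : Fin (n + 1) → Fin (m + 1) → Z) : ℝ :=
  (w (Fin.last n) (v (Fin.last n) (k (Fin.last n))) /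
      ∑ i, w (Fin.last n) (v (Fin.last n) i)) *
    ∏ t : Fin n,
      (w t.castSucc (v t.castSucc (k t.castSucc)) *
          f (v t.castSucc (k t.castSucc)) (v t.succ (k t.succ))) /
        ∑ i, w t.castSucc (v t.castSucc i) * f (v t.castSucc i) (v t.succ (k t.succ))

/-- The particle-filter density `ψ(v)`. -/
noncomputable def psiPF (n m : ℕ) (m₀ : Z → ℝ) (f : Z → Z → ℝ)
    (w : Fin (n + 1) → Z → ℝ) (v : Fin (n + 1) → Fin (m + 1) → Z) : ℝ :=
  (∏ i, m₀ (v 0 i)) *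
    ∏ t : Fin n, ∏ i : Fin (m + 1),
      (∑ j, w t.castSucc (v t.castSucc j) * f (v t.castSucc j) (v t.succ i)) /
        ∑ j, w t.castSucc (v t.castSucc j)

/-- The normalising-constant estimator `Ĉ(v) = ∏_t M⁻¹ ∑_i w_t(v_t^{(i)})` with `M = m+1`. -/
noncomputable def Chat (n m : ℕ) (w : Fin (n + 1) → Z → ℝ)
    (v : Fin (n + 1) → Fin (m + 1) → Z) : ℝ :=
  ∏ t, ((m : ℝ) + 1)⁻¹ * ∑ i, w t (v t i)

/-- The conditional-SMC density `(π⊗Φ)(v)`, with `π = γ/C`. -/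
noncomputable def piPhi (n m : ℕ) (m₀ : Z → ℝ) (f : Z → Z → ℝ)
    (w : Fin (n + 1) → Z → ℝ) (C : ℝ) (v : Fin (n + 1) → Fin (m + 1) → Z) : ℝ :=
  (gammaSSM n m₀ f w (pathOf n m v (onePath n m)) / C) *
    (∏ i ∈ univ.erase (0 : Fin (m + 1)), m₀ (v 0 i)) *
    ∏ t : Fin n, ∏ i ∈ univ.erase (0 : Fin (m + 1)),
      (∑ j, w t.castSucc (v t.castSucc j) * f (v t.castSucc j) (v t.succ i)) /
        ∑ j, w t.castSucc (v t.castSucc j)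

noncomputable def mixtureDensity (n m : ℕ) (f : Z → Z → ℝ) (w : Fin (n + 1) → Z → ℝ)
    (v : Fin (n + 1) → Fin (m + 1) → Z) (t : Fin n) (z : Z) : ℝ :=
  (∑ j, w t.castSucc (v t.castSucc j) * f (v t.castSucc j) z) / ∑ j, w t.castSucc (v t.castSucc j)

section

variable {n m : ℕ} {m₀ : Z → ℝ} {f : Z → Z → ℝ} {w : Fin (n + 1) → Z → ℝ}
  (v : Fin (n + 1) → Fin (m + 1) → Z)

theorem psiPF_eq_mul_prod_erase (i₀ : Fin (m + 1)) :
    psiPF n m m₀ f w v =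
      (m₀ (v 0 i₀) * ∏ t : Fin n, mixtureDensity n m f w v t (v t.succ i₀)) *
        ((∏ i ∈ univ.erase i₀, m₀ (v 0 i)) *
          ∏ t : Fin n, ∏ i ∈ univ.erase i₀, mixtureDensity n m f w v t (v t.succ i)) := by
  change (∏ i, m₀ (v 0 i)) * ∏ t : Fin n, ∏ i, mixtureDensity n m f w v t (v t.succ i) = _
  simp_rw [← mul_prod_erase univ _ (mem_univ i₀), prod_mul_distrib]
  ring

theorem Chat_eq_prod_div_pow :
    Chat n m w v = (∏ t, ∑ i, w t (v t i)) / ((m : ℝ) + 1) ^ (n + 1) := by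
  rw [Chat, prod_mul_distrib, prod_const, card_univ, Fintype.card_fin, inv_pow, inv_mul_eq_div]

theorem gammaSSM_pathOf_eq_mul_bBack (hf : ∀ z z', 0 < f z z') (hw : ∀ t z, 0 < w t z)
    (k : Fin (n + 1) → Fin (m + 1)) :
    gammaSSM n m₀ f w (pathOf n m v k) =
      m₀ (v 0 (k 0)) * (∏ t : Fin n, mixtureDensity n m f w v t (v t.succ (k t.succ))) *
        (∏ t, ∑ i, w t (v t i)) * bBack n m f w k v := by
  have hW : ∀ t, (∑ i, w t (v t i)) ≠ 0 :=
    fun t => (sum_pos (fun i _ => hw _ _) univ_nonempty).ne'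
  have hS : ∀ (t : Fin n) z, (∑ j, w t.castSucc (v t.castSucc j) * f (v t.castSucc j) z) ≠ 0 :=
    fun t z => (sum_pos (fun j _ => mul_pos (hw _ _) (hf _ _)) univ_nonempty).ne'
  have hstep : ∀ t : Fin n,
      mixtureDensity n m f w v t (v t.succ (k t.succ)) * (∑ i, w t.castSucc (v t.castSucc i)) *
          ((w t.castSucc (v t.castSucc (k t.castSucc)) *
              f (v t.castSucc (k t.castSucc)) (v t.succ (k t.succ))) /
            ∑ i, w t.castSucc (v t.castSucc i) * f (v t.castSucc i) (v t.succ (k t.succ))) =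
        w t.castSucc (v t.castSucc (k t.castSucc)) *
          f (v t.castSucc (k t.castSucc)) (v t.succ (k t.succ)) := by
    intro t
    rw [mixtureDensity]
    field_simp [hW t.castSucc, hS t]
  have hprod := prod_congr rfl fun t (_ : t ∈ univ) => hstep t
  simp only [prod_mul_distrib] at hprod
  have hlast := hW (Fin.last n)
  simp only [gammaSSM, pathOf, bBack, Fin.prod_univ_castSucc (fun t => ∑ i, w t (v t i)),
    Fin.prod_univ_castSucc (fun t => w t (v t (k t)))]
  field_simp
  linear_combination -(m₀ (v 0 (k 0)) * w (Fin.last n) (v (Fin.last n) (k (Fin.last n)))) * hprod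

end

theorem cSMC_unconditional_identity_general
    (n m : ℕ)
    (m₀ : Z → ℝ) (f : Z → Z → ℝ) (w : Fin (n + 1) → Z → ℝ)
    (hfpos : ∀ z z', 0 < f z z') (hwpos : ∀ t z, 0 < w t z)
    (C : ℝ)
    (v : Fin (n + 1) → Fin (m + 1) → Z) :
    piPhi n m m₀ f w C v
      = ((m : ℝ) + 1) ^ (n + 1) * (psiPF n m m₀ f w v * Chat n m w v / C) *
          bBack n m f w (onePath n m) v := by
  have hpiPhi : piPhi n m m₀ f w C v =
      gammaSSM n m₀ f w (pathOf n m v (onePath n m)) / C *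
        ((∏ i ∈ univ.erase 0, m₀ (v 0 i)) *
          ∏ t : Fin n, ∏ i ∈ univ.erase 0, mixtureDensity n m f w v t (v t.succ i)) :=
    mul_assoc _ _ _
  have hM : ((m : ℝ) + 1) ≠ 0 := by positivity
  rw [hpiPhi, gammaSSM_pathOf_eq_mul_bBack v hfpos hwpos, psiPF_eq_mul_prod_erase v 0,
    Chat_eq_prod_div_pow]
  simp only [onePath]
  field_simp

/-- For every particle array `v`,
`(π⊗Φ)(v) = M^T · ψ̄(v) · b(𝟏|v)` where `ψ̄ = ψ·Ĉ/C`, `T = n+1` and `M = m+1`. -/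
theorem cSMC_unconditional_identity
    [MeasurableSpace Z] (ν : Measure Z) [SigmaFinite ν] (n m : ℕ)
    (m₀ : Z → ℝ) (f : Z → Z → ℝ) (w : Fin (n + 1) → Z → ℝ)
    (hm₀ : Measurable m₀) (hf : Measurable fun p : Z × Z => f p.1 p.2)
    (hw : ∀ t, Measurable (w t))
    (hm₀pos : ∀ z, 0 < m₀ z) (hfpos : ∀ z z', 0 < f z z') (hwpos : ∀ t z, 0 < w t z)
    (C : ℝ)
    (hC : C = ∫ z, gammaSSM n m₀ f w z ∂(Measure.pi fun _ : Fin (n + 1) => ν))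
    (hCpos : 0 < C)
    (hCint : Integrable (gammaSSM n m₀ f w) (Measure.pi fun _ : Fin (n + 1) => ν))
    (v : Fin (n + 1) → Fin (m + 1) → Z) :
    piPhi n m m₀ f w C v
      = ((m : ℝ) + 1) ^ (n + 1) * (psiPF n m m₀ f w v * Chat n m w v / C) *
          bBack n m f w (onePath n m) v :=
  cSMC_unconditional_identity_general n m m₀ f w hfpos hwpos C v

end SSM12
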